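/- arXiv:2112.15145 — 3 statements merged into one kernel-verified Lean document; each statement's English description precedes it below -/
import Mathlib

section
/- Let A be an abelian group, let b, c be integers, and let ω : A → A be an additive group endomorphism satisfying ω(ω(x)) = b·ω(x) − c·x for all x ∈ A. Suppose P ∈ A and n, m are coprime integers (there exist integers x, y with n·x + m·y = 1) such that n·P + m·ω(P) = 0. Then there exists an integer k with ω(P) = k·P; explicitly one may take k = n·x·b − n·y + m·x·c. -/
/-- The key computational step in Lemma 4.2: if `ω² = b·ω − c`, `n·x + m·y = 1` and
`n·P + m·ω(P) = 0`, then `ω(P) = (n·x·b − n·y + m·x·c)·P`; in particular `ω(P)` is an integer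
multiple of `P`. -/
theorem stmt_1 {A : Type*} [AddCommGroup A] (b c : ℤ) (ω : A →+ A)
    (hω : ∀ z : A, ω (ω z) = b • ω z - c • z)
    (P : A) (n m x y : ℤ) (hxy : n * x + m * y = 1)
    (h : n • P + m • ω P = 0) :
    ∃ k : ℤ, ω P = k • P ∧ k = n * x * b - n * y + m * x * c := by
  refine ⟨_, ?_, rfl⟩
  have h2 : n • ω P + m • (b • ω P - c • P) = 0 := by
    rw [← hω, ← map_zsmul, ← map_zsmul, ← map_add, h, map_zero]
  have h3 : (1 : ℤ) • ω P = (n * x * b - n * y + m * x * c) • P := by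
    rw [← hxy]
    linear_combination (norm := module) x • h2 + (y - x * b) • h
  simpa using h3
end

section
/- Let n be an integer, let a = −2 + 7n regarded as an element of ℚ₇, and let E_n be the elliptic curve over ℚ₇ with Weierstrass equation y² = x³ + a. Then E_n has a ℚ₇-rational point of exact order 7: there exists P ∈ E_n(ℚ₇) with P ≠ O and 7·P = O. -/
instance : Fact (Nat.Prime 7) := ⟨by norm_num⟩

/-- The elliptic curve `Eₙ : y² = x³ + (−2 + 7n)` over `ℚ₇`. -/
noncomputable def En (n : ℤ) : WeierstrassCurve.Affine ℚ_[7] :=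
  { a₁ := 0, a₂ := 0, a₃ := 0, a₄ := 0, a₆ := ((-2 + 7 * n : ℤ) : ℚ_[7]) }

/-!
Let `ζ` be a primitive cube root of unity. The three points `(x, y)`, `(ζx, y)`, `(ζ²x, y)` of
`y² = x³ + b` lie on the line `Y = y`, so they sum to zero. If moreover `x³ (3ζ + 1) = -4b`, the
tangent at `P = (x, y)` meets the curve again at `(ζx, -y)`, so `2P = (ζx, y)` and, since
`(ζx)³ = x³`, also `4P = (ζ²x, y)`. Hence `7P = (4P + 2P) + P = 0`.

Over `ℚ₇` with `b ≡ -2 mod 7`, Hensel's lemma provides `ζ ≡ 4`, then `x ≡ 3` with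
`x³ = -4b / (3ζ + 1)` (this `x³` is the `θ ≡ 6` of the paper), then `y = √(x³ + b) ≡ 2`.
-/

open Polynomial WeierstrassCurve.Affine

namespace PadicInt

variable {p : ℕ} [Fact p.Prime]

theorem toZMod_eq_zero_iff_norm_lt_one {z : ℤ_[p]} : toZMod z = 0 ↔ ‖z‖ < 1 := by
  rw [← RingHom.mem_ker, ker_toZMod, ← mem_nonunits]
  rfl

theorem toZMod_ne_zero_iff_norm_eq_one {z : ℤ_[p]} : toZMod z ≠ 0 ↔ ‖z‖ = 1 := by
  rw [Ne, toZMod_eq_zero_iff_norm_lt_one, not_lt]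
  exact ⟨(norm_le_one z).antisymm, ge_of_eq⟩

theorem exists_eval_eq_zero_of_toZMod {F : ℤ_[p][X]} {a : ℤ_[p]}
    (h : toZMod (F.eval a) = 0) (h' : toZMod (F.derivative.eval a) ≠ 0) :
    ∃ z, F.eval z = 0 ∧ toZMod z = toZMod a := by
  rw [toZMod_eq_zero_iff_norm_lt_one] at h
  rw [toZMod_ne_zero_iff_norm_eq_one] at h'
  obtain ⟨z, hz, hza, -⟩ := hensels_lemma (F := F) (a := a) (by simpa [h'] using h)
  refine ⟨z, by simpa using hz, ?_⟩
  rw [← sub_eq_zero, ← map_sub, toZMod_eq_zero_iff_norm_lt_one]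
  simpa [h'] using hza

theorem exists_seven_torsion_coords {a : ℤ_[7]} (ha : toZMod a = -2) :
    ∃ ζ x y : ℤ_[7],
      ζ ^ 2 + ζ + 1 = 0 ∧ x ^ 3 * (3 * ζ + 1) = -4 * a ∧ y ^ 2 = x ^ 3 + a ∧ y ≠ 0 := by
  obtain ⟨ζ, hζ, hζ4⟩ := exists_eval_eq_zero_of_toZMod (p := 7) (F := X ^ 2 + X + 1) (a := 4)
    (by simp [map_ofNat]; decide) (by simp [map_ofNat]; decide)
  obtain ⟨x, hx, hx3⟩ :=
    exists_eval_eq_zero_of_toZMod (F := C (3 * ζ + 1) * X ^ 3 + C (4 * a)) (a := 3)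
      (by simp [map_ofNat, hζ4, ha]; decide) (by simp [map_ofNat, hζ4]; decide)
  obtain ⟨y, hy, hy2⟩ := exists_eval_eq_zero_of_toZMod (F := X ^ 2 - C (x ^ 3 + a)) (a := 2)
    (by simp [map_ofNat, hx3, ha]; decide)
    (by rw [derivative_sub, derivative_C]; simp [map_ofNat]; decide)
  refine ⟨ζ, x, y, by simpa using hζ, ?_, ?_, ?_⟩
  · simp only [eval_add, eval_mul, eval_C, eval_pow, eval_X] at hx
    linear_combination hx
  · simp only [eval_sub, eval_C, eval_pow, eval_X] at hy
    linear_combination hy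
  · rintro rfl
    rw [map_zero, map_ofNat] at hy2
    exact absurd hy2 (by decide)

end PadicInt

variable {F : Type*} [Field F]

def mordellCurve (b : F) : WeierstrassCurve.Affine F :=
  { a₁ := 0, a₂ := 0, a₃ := 0, a₄ := 0, a₆ := b }

namespace mordellCurve

variable {b x y : F}

lemma equation_iff : (mordellCurve b).Equation x y ↔ y ^ 2 = x ^ 3 + b := by
  rw [WeierstrassCurve.Affine.equation_iff]
  simp [mordellCurve]

lemma negY_eq : (mordellCurve b).negY x y = -y := by
  simp [mordellCurve, negY]

lemma nonsingular (h2 : (2 : F) ≠ 0) (hy : y ≠ 0) (h : y ^ 2 = x ^ 3 + b) :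
    (mordellCurve b).Nonsingular x y := by
  refine (nonsingular_iff x y).mpr ⟨equation_iff.mpr h, Or.inr ?_⟩
  simp only [mordellCurve, sub_zero]
  exact fun h' => hy (mul_left_cancel₀ h2 (by linear_combination h'))

variable [DecidableEq F]

lemma some_add_self_eq_some_mul (h2 : (2 : F) ≠ 0) {ζ : F} (hζ : ζ ^ 2 + ζ + 1 = 0)
    (hx : x ^ 3 * (3 * ζ + 1) = -4 * b) (hy : y ≠ 0) (h : (mordellCurve b).Nonsingular x y)
    (h' : (mordellCurve b).Nonsingular (ζ * x) y) :
    Point.some _ _ h + Point.some _ _ h = Point.some _ _ h' := by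
  have hyx : y ^ 2 = x ^ 3 + b := equation_iff.mp h.1
  have hy' : y ≠ (mordellCurve b).negY x y := by
    rw [negY_eq]
    exact fun h' => hy (mul_left_cancel₀ h2 (by linear_combination h'))
  have hslope : (mordellCurve b).slope x x y y = 3 * x ^ 2 / (2 * y) := by
    rw [slope_of_Y_ne rfl hy', negY_eq]
    simp only [mordellCurve, mul_zero, zero_mul, add_zero, sub_zero, sub_neg_eq_add]
    ring
  rw [Point.add_self_of_Y_ne hy', Point.some.injEq]
  constructor
  · rw [addX, hslope]
    field_simp
    simp only [mordellCurve, mul_zero, add_zero, sub_zero]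
    linear_combination (-8 * x - 4 * ζ * x) * hyx - x * (2 + ζ) * hx + 3 * x ^ 4 * hζ
  · rw [addY, negAddY, addX, hslope, negY_eq]
    field_simp
    simp only [mordellCurve, mul_zero, add_zero, sub_zero, neg_add_rev]
    linear_combination (-16 * y ^ 2 + 20 * x ^ 3 - 16 * b) * hyx +
      (x ^ 3 - 4 * b + x ^ 3 * (3 * ζ + 1)) * hx - 9 * x ^ 6 * hζ

lemma some_add_some_of_same_Y {x₁ x₂ : F} (hx : x₁ ≠ x₂)
    (h₁ : (mordellCurve b).Nonsingular x₁ y) (h₂ : (mordellCurve b).Nonsingular x₂ y)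
    (h₃ : (mordellCurve b).Nonsingular x (-y))
    (hsum : x₁ + x₂ + x = 0) :
    Point.some _ _ h₁ + Point.some _ _ h₂ = Point.some _ _ h₃ := by
  have hslope : (mordellCurve b).slope x₁ x₂ y y = 0 := by simp [slope_of_X_ne hx]
  rw [Point.add_of_X_ne hx, Point.some.injEq]
  constructor
  · rw [addX, hslope]
    simp only [mordellCurve]
    linear_combination -hsum
  · rw [addY, negAddY, hslope, negY_eq]
    simp only [mordellCurve]
    ring

theorem seven_smul_some_eq_zero (h2 : (2 : F) ≠ 0) {ζ : F} (hζ : ζ ^ 2 + ζ + 1 = 0)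
    (hx : x ^ 3 * (3 * ζ + 1) = -4 * b) (hy : y ≠ 0) (h : (mordellCurve b).Nonsingular x y) :
    7 • Point.some _ _ h = 0 := by
  have hyx : y ^ 2 = x ^ 3 + b := equation_iff.mp h.1
  have hζ3 : ζ ^ 3 = 1 := by linear_combination (ζ - 1) * hζ
  have hζx : (ζ * x) ^ 3 * (3 * ζ + 1) = -4 * b := by
    linear_combination hx + x ^ 3 * (3 * ζ + 1) * hζ3
  have hy4 : 4 * y ^ 2 ≠ 0 := by
    simpa [show (4 : F) = 2 * 2 by norm_num] using
      mul_ne_zero (mul_ne_zero h2 h2) (pow_ne_zero 2 hy)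
  -- `4y² = 3x³(1 - ζ)`, so `x ≠ 0` and `ζ ≠ 1`.
  have hne : ζ * (ζ * x) ≠ ζ * x := fun h =>
    hy4 (by linear_combination 4 * hyx + hx - 3 * x ^ 2 * ζ ^ 2 * h + 3 * x ^ 3 * (ζ - 1) * hζ3)
  have h₂ : (mordellCurve b).Nonsingular (ζ * x) y :=
    nonsingular h2 hy (by linear_combination hyx - x ^ 3 * hζ3)
  have h₄ : (mordellCurve b).Nonsingular (ζ * (ζ * x)) y :=
    nonsingular h2 hy (by linear_combination hyx - x ^ 3 * (ζ ^ 3 + 1) * hζ3)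
  have h₆ : (mordellCurve b).Nonsingular x (-y) :=
    nonsingular h2 (neg_ne_zero.mpr hy) (by linear_combination hyx)
  calc 7 • Point.some _ _ h
      = ((Point.some _ _ h + Point.some _ _ h) + (Point.some _ _ h + Point.some _ _ h)) +
          (Point.some _ _ h + Point.some _ _ h) + Point.some _ _ h := by abel
    _ = Point.some _ _ h₆ + Point.some _ _ h := by
      rw [some_add_self_eq_some_mul h2 hζ hx hy h h₂,
        some_add_self_eq_some_mul h2 hζ hζx hy h₂ h₄,
        some_add_some_of_same_Y hne h₄ h₂ h₆ (by linear_combination x * hζ)]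
    _ = 0 := Point.add_of_Y_eq rfl (by rw [negY_eq])

end mordellCurve

open PadicInt Classical in
theorem mordellCurve.exists_seven_torsion {a : ℤ_[7]} (ha : toZMod a = -2) :
    ∃ P : (mordellCurve (a : ℚ_[7])).Point, P ≠ 0 ∧ 7 • P = 0 := by
  obtain ⟨ζ, x, y, hζ, hx, hy, hy0⟩ := exists_seven_torsion_coords ha
  have hζ' : (ζ : ℚ_[7]) ^ 2 + ζ + 1 = 0 := by
    exact_mod_cast congrArg ((↑) : ℤ_[7] → ℚ_[7]) hζ
  have hx' : (x : ℚ_[7]) ^ 3 * (3 * ζ + 1) = -4 * a := by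
    exact_mod_cast congrArg ((↑) : ℤ_[7] → ℚ_[7]) hx
  have hy' : (y : ℚ_[7]) ^ 2 = x ^ 3 + a := by
    exact_mod_cast congrArg ((↑) : ℤ_[7] → ℚ_[7]) hy
  have hy0' : (y : ℚ_[7]) ≠ 0 := coe_eq_zero.not.mpr hy0
  have hP : (mordellCurve (a : ℚ_[7])).Nonsingular x y := nonsingular two_ne_zero hy0' hy'
  exact ⟨_, Point.some_ne_zero hP, seven_smul_some_eq_zero two_ne_zero hζ' hx' hy0' hP⟩

open Classical in
/-- Lemma A.1 (existence): the curve `Eₙ : y² = x³ + (−2 + 7n)` has a `ℚ₇`-rational point of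
exact order 7. -/
theorem stmt_3 (n : ℤ) :
    ∃ P : (En n).Point, P ≠ 0 ∧ 7 • P = 0 := by
  refine mordellCurve.exists_seven_torsion (a := ((-2 + 7 * n : ℤ) : ℤ_[7])) ?_
  have h7 : (7 : ZMod 7) = 0 := by decide
  simp [map_ofNat, h7]
end

section
/- Let R be a commutative ring, let a ∈ R, and let W be the Weierstrass curve over R with equation y² = x³ + a (i.e. a₁ = a₂ = a₃ = a₄ = 0 and a₆ = a). Then the 7th division polynomial of W factors as ψ₇ = (7X⁶ − 4aX³ + 16a²) · (X¹⁸ + 564aX¹⁵ − 5808a²X¹² − 123136a³X⁹ − 189696a⁴X⁶ − 49152a⁵X³ + 4096a⁶) in R[X]. -/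
open Polynomial

/-- The factorization of the 7th division polynomial of the curve `y² = x³ + a` over any
commutative ring, as computed in the proof of Lemma A.1. -/
theorem stmt_4 {R : Type*} [CommRing R] (a : R) :
    ({ a₁ := 0, a₂ := 0, a₃ := 0, a₄ := 0, a₆ := a } : WeierstrassCurve R).preΨ 7 =
      (7 * X ^ 6 - C (4 * a) * X ^ 3 + C (16 * a ^ 2)) *
        (X ^ 18 + C (564 * a) * X ^ 15 - C (5808 * a ^ 2) * X ^ 12 -
          C (123136 * a ^ 3) * X ^ 9 - C (189696 * a ^ 4) * X ^ 6 -
          C (49152 * a ^ 5) * X ^ 3 + C (4096 * a ^ 6)) := by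
  set W : WeierstrassCurve R := { a₁ := 0, a₂ := 0, a₃ := 0, a₄ := 0, a₆ := a } with hW
  have : W.preΨ 7 = W.preΨ' 7 := by
    rw [show ((7 : ℤ)) = ((7 : ℕ) : ℤ) by norm_num, W.preΨ_ofNat]
  rw [this, show (7 : ℕ) = 2 * (1 + 2) + 1 from rfl, W.preΨ'_odd,
    show (1 : ℕ) + 4 = 2 * (0 + 2) + 1 from rfl, W.preΨ'_odd]
  simp only [Nat.reduceAdd, zero_add, WeierstrassCurve.preΨ'_one, WeierstrassCurve.preΨ'_two,
    WeierstrassCurve.preΨ'_three, WeierstrassCurve.preΨ'_four, if_pos (Even.zero),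
    if_neg (Nat.not_even_iff_odd.2 odd_one)]
  simp only [WeierstrassCurve.Ψ₂Sq, WeierstrassCurve.Ψ₃, WeierstrassCurve.preΨ₄,
    WeierstrassCurve.b₂, WeierstrassCurve.b₄, WeierstrassCurve.b₆, WeierstrassCurve.b₈, hW]
  simp only [map_add, map_mul, map_sub, map_neg, map_pow, map_zero, map_one, map_ofNat]
  ring1
end
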